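/- arXiv:1905.11384 — 3 statements merged into one kernel-verified Lean document; each statement's English description precedes it below -/
import Mathlib

section
/- Identify ℝⁿ with ℝ^{m₁} × ⋯ × ℝ^{m_d} (d ≥ 2, m₁ + ⋯ + m_d = n) and write x = (x₁,…,x_d); let ∇_l f(x) ∈ ℝ^{m_l} be the gradient of f with respect to the l-th block. Let f : ℝⁿ → ℝ be C² and strictly convex with unique minimum point x*, let x₀ ∈ ℝⁿ, t₀ = f(x₀), and suppose all eigenvalues of the Hessian H(f)(y) lie in [α, β] (0 < α ≤ β) for every y ∈ V(t₀) = {y : f(y) ≤ t₀}; set κ = β/α. Suppose j ∈ [d] satisfies ‖∇_j f(x₀)‖ = max_{l ∈ [d]} ‖∇_l f(x₀)‖, and let x₁ be obtained from x₀ by replacing the j-th block by the (unique) minimizer of x_j ↦ f(x₀^j, x_j) with the other blocks fixed. Then f(x₁) − f(x*) ≤ (f(x₀) − f(x*))·(1 − 1/(dκ)). -/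
/-!
Let `g = ∇f(x₀)`. A positive semidefinite Hessian makes `f` convex, so the sublevel set
`V(f x₀)` is convex and contains the segment `[x₀, x*]`; the lower Hessian bound `α` along it
gives the Polyak–Łojasiewicz inequality `f x₀ - f x* ≤ ‖g‖² / (2α)`. The step
`x₀ - β⁻¹ g_j` in block `j` alone stays in `V(f x₀)`, where the upper bound `β` applies, and
decreases `f` by at least `‖g_j‖² / (2β) ≥ ‖g‖² / (2dβ)` by the choice of `j`; the block
minimizer `x₁` does at least as well.
-/

open Set

section OneDim

variable {φ φ' φ'' : ℝ → ℝ} {t C : ℝ}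

theorem image_le_of_hasDerivAt_of_deriv2_le (ht : 0 ≤ t)
    (hφ : ∀ s ∈ Icc 0 t, HasDerivAt φ (φ' s) s) (hφ' : ∀ s ∈ Icc 0 t, HasDerivAt φ' (φ'' s) s)
    (hC : ∀ s ∈ Icc 0 t, φ'' s ≤ C) :
    φ t ≤ φ 0 + t * φ' 0 + C * t ^ 2 / 2 := by
  rcases ht.eq_or_lt with rfl | ht
  · simp
  have hq (s : ℝ) : HasDerivAt (fun s => C * s ^ 2 / 2) (C * s) s :=
    (((hasDerivAt_pow 2 s).const_mul C).div_const 2).congr_deriv (by ring)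
  have hlin (s : ℝ) : HasDerivAt (fun s => C * s) C s := by
    simpa using (hasDerivAt_id s).const_mul C
  have hint : interior (Icc 0 t) ⊆ Icc 0 t := interior_subset
  have hconcave : ConcaveOn ℝ (Icc 0 t) fun s => φ s - C * s ^ 2 / 2 :=
    concaveOn_of_hasDerivWithinAt2_nonpos (convex_Icc 0 t)
      (fun s hs => ((hφ s hs).sub (hq s)).continuousAt.continuousWithinAt)
      (fun s hs => ((hφ s (hint hs)).sub (hq s)).hasDerivWithinAt)
      (fun s hs => ((hφ' s (hint hs)).sub (hlin s)).hasDerivWithinAt)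
      (fun s hs => sub_nonpos.2 (hC s (hint hs)))
  have hslope := hconcave.slope_le_of_hasDerivAt (left_mem_Icc.2 ht.le) (right_mem_Icc.2 ht.le) ht
    ((hφ 0 (left_mem_Icc.2 ht.le)).sub (hq 0))
  rw [slope_def_field, div_le_iff₀ (by simpa using ht)] at hslope
  linarith

theorem le_image_of_hasDerivAt_of_le_deriv2 (ht : 0 ≤ t)
    (hφ : ∀ s ∈ Icc 0 t, HasDerivAt φ (φ' s) s) (hφ' : ∀ s ∈ Icc 0 t, HasDerivAt φ' (φ'' s) s)
    (hC : ∀ s ∈ Icc 0 t, C ≤ φ'' s) :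
    φ 0 + t * φ' 0 + C * t ^ 2 / 2 ≤ φ t := by
  have := image_le_of_hasDerivAt_of_deriv2_le (φ := -φ) (φ'' := -φ'') (C := -C) ht
    (fun s hs => (hφ s hs).neg) (fun s hs => (hφ' s hs).neg) (fun s hs => neg_le_neg (hC s hs))
  simp only [Pi.neg_apply] at this
  linarith

theorem image_one_le_of_deriv2_le_on_sublevel {a : ℝ} (ha : 0 < a)
    (hφ : ∀ s, HasDerivAt φ (φ' s) s) (hφ' : ∀ s, HasDerivAt φ' (φ'' s) s) (h₀ : φ' 0 = -a)
    (hC : ∀ s ∈ Icc (0 : ℝ) 1, φ s ≤ φ 0 → φ'' s ≤ a) :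
    φ 1 ≤ φ 0 - a / 2 := by
  have hcont : Continuous φ := continuous_iff_continuousAt.2 fun s => (hφ s).continuousAt
  have htaylor : ∀ t ∈ Icc (0 : ℝ) 1, Icc 0 t ⊆ {s | φ s ≤ φ 0} →
      φ t ≤ φ 0 - a * t + a * t ^ 2 / 2 := by
    intro t ht hsub
    have := image_le_of_hasDerivAt_of_deriv2_le ht.1 (fun s _ => hφ s) (fun s _ => hφ' s)
      fun s hs => hC s ⟨hs.1, hs.2.trans ht.2⟩ (hsub hs)
    rw [h₀] at this
    linarith
  -- Continuous induction: while `[0, t]` stays in the sublevel set, the Taylor bound gives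
  -- `φ t < φ 0` for `0 < t < 1`, so the interval can be pushed past `t`.
  have hsub : Icc (0 : ℝ) 1 ⊆ {s | φ s ≤ φ 0} := by
    refine IsClosed.Icc_subset_of_forall_mem_nhdsGT_of_Icc_subset
      ((isClosed_le hcont continuous_const).inter isClosed_Icc) (le_refl (φ 0)) fun t ht hsub => ?_
    rcases ht.1.eq_or_lt with rfl | htpos
    · have hslope := ((hφ 0).hasDerivWithinAt (s := Ioi 0)).limsup_slope_le' (lt_irrefl 0)
        (h₀.trans_lt (neg_neg_of_pos ha))
      filter_upwards [hslope, self_mem_nhdsWithin] with s hs hspos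
      rw [slope_def_field, div_lt_iff₀ (sub_pos.2 hspos)] at hs
      exact show φ s ≤ φ 0 by linarith
    · have hlt : φ t < φ 0 := by
        have := htaylor t (Ico_subset_Icc_self ht) hsub
        nlinarith [mul_pos (mul_pos ha htpos) (sub_pos.2 ht.2)]
      exact mem_nhdsWithin_of_mem_nhds
        ((hcont.continuousAt.eventually_lt continuousAt_const hlt).mono fun _ => le_of_lt)
  linarith [htaylor 1 (right_mem_Icc.2 zero_le_one) hsub]

end OneDim

section Line

variable {E : Type*} [NormedAddCommGroup E] [NormedSpace ℝ E] {f : E → ℝ}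

theorem Differentiable.hasDerivAt_comp_add_smul {F : Type*} [NormedAddCommGroup F]
    [NormedSpace ℝ F] {g : E → F} (hg : Differentiable ℝ g) (x v : E) (t : ℝ) :
    HasDerivAt (fun s : ℝ => g (x + s • v)) (fderiv ℝ g (x + t • v) v) t :=
  (hg _).hasFDerivAt.comp_hasDerivAt t <| by
    simpa using ((hasDerivAt_id t).smul_const v).const_add x

theorem ContDiff.hasDerivAt_fderiv_comp_add_smul (hf : ContDiff ℝ 2 f) (x v : E) (t : ℝ) :
    HasDerivAt (fun s : ℝ => fderiv ℝ f (x + s • v) v)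
      (iteratedFDeriv ℝ 2 f (x + t • v) ![v, v]) t := by
  have hd : Differentiable ℝ (fderiv ℝ f) :=
    (hf.fderiv_right (by norm_num)).differentiable one_ne_zero
  rw [iteratedFDeriv_two_apply]
  exact (ContinuousLinearMap.apply ℝ ℝ v).hasFDerivAt.comp_hasDerivAt t
    (hd.hasDerivAt_comp_add_smul x v t)

theorem convexOn_univ_of_iteratedFDeriv_two_nonneg (hf : ContDiff ℝ 2 f)
    (hH : ∀ x v, 0 ≤ iteratedFDeriv ℝ 2 f x ![v, v]) : ConvexOn ℝ univ f := by
  refine ⟨convex_univ, fun x _ y _ a b ha hb hab => ?_⟩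
  have hφ (s : ℝ) := (hf.differentiable two_ne_zero).hasDerivAt_comp_add_smul x (y - x) s
  have hline : ConvexOn ℝ univ fun s : ℝ => f (x + s • (y - x)) :=
    convexOn_of_hasDerivWithinAt2_nonneg convex_univ
      (fun s _ => (hφ s).continuousAt.continuousWithinAt) (fun s _ => (hφ s).hasDerivWithinAt)
      (fun s _ => (hf.hasDerivAt_fderiv_comp_add_smul x (y - x) s).hasDerivWithinAt)
      (fun s _ => hH _ _)
  have := hline.2 (mem_univ 0) (mem_univ 1) ha hb hab
  have hx : a • x + b • y = x + (a • (0 : ℝ) + b • (1 : ℝ)) • (y - x) := by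
    rw [show a = 1 - b by linarith]
    module
  simpa [hx] using this

end Line

section Descent

variable {E : Type*} [NormedAddCommGroup E] [NormedSpace ℝ E] {f : E → ℝ} {x : E}

theorem apply_sub_smul_le_of_fderiv_apply_eq_norm_sq (hf : ContDiff ℝ 2 f) {β : ℝ} (hβ : 0 < β)
    (hH : ∀ y, f y ≤ f x → ∀ v, iteratedFDeriv ℝ 2 f y ![v, v] ≤ β * ‖v‖ ^ 2)
    {u : E} (hu : fderiv ℝ f x u = ‖u‖ ^ 2) :
    f (x - β⁻¹ • u) ≤ f x - ‖u‖ ^ 2 / (2 * β) := by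
  rcases eq_or_ne u 0 with rfl | hu0
  · simp
  have hdesc := image_one_le_of_deriv2_le_on_sublevel (φ := fun s : ℝ => f (x + s • -(β⁻¹ • u)))
    (a := β⁻¹ * ‖u‖ ^ 2) (by positivity)
    ((hf.differentiable two_ne_zero).hasDerivAt_comp_add_smul x _)
    (hf.hasDerivAt_fderiv_comp_add_smul x _) (by simp [hu])
    fun s _ hs => by
      refine (hH _ (by simpa using hs) _).trans_eq ?_
      rw [norm_neg, norm_smul, Real.norm_eq_abs, abs_of_pos (inv_pos.2 hβ)]
      field_simp
  simp only [one_smul, zero_smul, add_zero, ← sub_eq_add_neg] at hdesc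
  refine hdesc.trans_eq ?_
  field_simp

end Descent

section Gap

variable {E : Type*} [NormedAddCommGroup E] [InnerProductSpace ℝ E] [CompleteSpace E]
  {f : E → ℝ} {x z : E}

theorem sub_le_norm_gradient_sq_div (hf : ContDiff ℝ 2 f) (hq : QuasiconvexOn ℝ univ f)
    {α : ℝ} (hα : 0 < α)
    (hH : ∀ y, f y ≤ f x → ∀ v, α * ‖v‖ ^ 2 ≤ iteratedFDeriv ℝ 2 f y ![v, v])
    (hz : f z ≤ f x) :
    f x - f z ≤ ‖gradient f x‖ ^ 2 / (2 * α) := by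
  set w := z - x
  have hseg : ∀ s ∈ Icc (0 : ℝ) 1, f (x + s • w) ≤ f x := fun s hs =>
    ((hq (f x)).add_smul_sub_mem ⟨mem_univ x, le_rfl⟩ ⟨mem_univ z, hz⟩ hs).2
  have hlow := le_image_of_hasDerivAt_of_le_deriv2 zero_le_one
    (fun s _ => (hf.differentiable two_ne_zero).hasDerivAt_comp_add_smul x w s)
    (fun s _ => hf.hasDerivAt_fderiv_comp_add_smul x w s)
    (fun s hs => hH _ (hseg s hs) w)
  have hinner : -(‖gradient f x‖ * ‖w‖) ≤ fderiv ℝ f x w := by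
    rw [← toDual_gradient, InnerProductSpace.toDual_apply_apply]
    exact neg_le_of_abs_le (abs_real_inner_le_norm _ _)
  simp only [one_smul, zero_smul, add_zero, one_pow, mul_one, one_mul, w, add_sub_cancel] at hlow
  rw [le_div_iff₀ (by positivity)]
  nlinarith [sq_nonneg (‖gradient f x‖ - α * ‖w‖)]

end Gap

theorem PiLp.norm_sq_le_card_mul_of_forall_norm_le {ι : Type*} [Fintype ι] {β : ι → Type*}
    [∀ i, SeminormedAddCommGroup (β i)] (x : PiLp 2 β) {j : ι} (h : ∀ l, ‖x l‖ ≤ ‖x j‖) :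
    ‖x‖ ^ 2 ≤ Fintype.card ι * ‖x j‖ ^ 2 := by
  rw [PiLp.norm_sq_eq_of_L2]
  calc ∑ l, ‖x l‖ ^ 2 ≤ ∑ _l : ι, ‖x j‖ ^ 2 := by gcongr with l; exact h l
    _ = Fintype.card ι * ‖x j‖ ^ 2 := by simp

section Block

variable {ι : Type*} [Fintype ι] [DecidableEq ι] {β : ι → Type*}
  [∀ i, NormedAddCommGroup (β i)] [∀ i, InnerProductSpace ℝ (β i)]

theorem PiLp.inner_single_right (x : PiLp 2 β) (j : ι) (b : β j) :
    inner ℝ x (PiLp.single 2 j b) = inner ℝ (x j) b := by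
  rw [PiLp.inner_apply, Finset.sum_eq_single j (fun l _ hl => by simp [Pi.single_eq_of_ne hl])
    (by simp)]
  simp

theorem apply_update_sub_smul_gradient_le [∀ i, CompleteSpace (β i)]
    {f : PiLp 2 β → ℝ} (hf : ContDiff ℝ 2 f) {x : PiLp 2 β} {L : ℝ} (hL : 0 < L)
    (hH : ∀ y, f y ≤ f x → ∀ v, iteratedFDeriv ℝ 2 f y ![v, v] ≤ L * ‖v‖ ^ 2) (j : ι) :
    f (WithLp.toLp 2 (Function.update x j (x j - L⁻¹ • gradient f x j))) ≤
      f x - ‖gradient f x j‖ ^ 2 / (2 * L) := by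
  have hu : fderiv ℝ f x (PiLp.single 2 j (gradient f x j)) =
      ‖PiLp.single 2 j (gradient f x j)‖ ^ 2 := by
    rw [← toDual_gradient, InnerProductSpace.toDual_apply_apply, PiLp.inner_single_right,
      PiLp.norm_single, real_inner_self_eq_norm_sq]
  have hstep : x - L⁻¹ • PiLp.single 2 j (gradient f x j) =
      WithLp.toLp 2 (Function.update x j (x j - L⁻¹ • gradient f x j)) := by
    ext l
    rcases eq_or_ne l j with rfl | hl
    · simp
    · simp [hl]
  simpa [hstep, PiLp.norm_single] using apply_sub_smul_le_of_fderiv_apply_eq_norm_sq hf hL hH hu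

end Block

theorem partial_min_first_step_general {d : ℕ} {m : Fin d → ℕ}
    (f : PiLp 2 (fun i : Fin d => EuclideanSpace ℝ (Fin (m i))) → ℝ)
    (hf : ContDiff ℝ 2 f)
    (hHess : ∀ x v : PiLp 2 (fun i : Fin d => EuclideanSpace ℝ (Fin (m i))), v ≠ 0 →
      0 < iteratedFDeriv ℝ 2 f x ![v, v])
    (xstar : PiLp 2 (fun i : Fin d => EuclideanSpace ℝ (Fin (m i))))
    (hmin : ∀ y, f xstar ≤ f y)
    (x₀ : PiLp 2 (fun i : Fin d => EuclideanSpace ℝ (Fin (m i))))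
    (α β : ℝ) (hα : 0 < α) (hαβ : α ≤ β)
    (hEig : ∀ y, f y ≤ f x₀ → ∀ v : PiLp 2 (fun i : Fin d => EuclideanSpace ℝ (Fin (m i))),
      α * ‖v‖ ^ 2 ≤ iteratedFDeriv ℝ 2 f y ![v, v] ∧
      iteratedFDeriv ℝ 2 f y ![v, v] ≤ β * ‖v‖ ^ 2)
    (j : Fin d)
    (hj : ∀ l : Fin d, ‖gradient f x₀ l‖ ≤ ‖gradient f x₀ j‖)
    (y : EuclideanSpace ℝ (Fin (m j)))
    (hy : ∀ z : EuclideanSpace ℝ (Fin (m j)),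
      f (WithLp.toLp 2 (Function.update x₀ j y)) ≤ f (WithLp.toLp 2 (Function.update x₀ j z))) :
    f (WithLp.toLp 2 (Function.update x₀ j y)) - f xstar ≤
      (f x₀ - f xstar) * (1 - 1 / (d * (β / α))) := by
  have hβ : 0 < β := hα.trans_le hαβ
  have hd : (0 : ℝ) < d := by exact_mod_cast j.pos
  have hconvex : ConvexOn ℝ univ f := convexOn_univ_of_iteratedFDeriv_two_nonneg hf fun x v => by
    rcases eq_or_ne v 0 with rfl | hv
    · exact ((iteratedFDeriv ℝ 2 f x).map_coord_zero 0 rfl).ge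
    · exact (hHess x v hv).le
  have hgap := sub_le_norm_gradient_sq_div hf hconvex.quasiconvexOn hα
    (fun y hy v => (hEig y hy v).1) (hmin x₀)
  have hstep := apply_update_sub_smul_gradient_le hf hβ (fun y hy v => (hEig y hy v).2) j
  have hcard := PiLp.norm_sq_le_card_mul_of_forall_norm_le (gradient f x₀) hj
  rw [Fintype.card_fin] at hcard
  have hshare : (f x₀ - f xstar) / (d * (β / α)) ≤ ‖gradient f x₀ j‖ ^ 2 / (2 * β) :=
    calc (f x₀ - f xstar) / (d * (β / α))
        _ ≤ ‖gradient f x₀‖ ^ 2 / (2 * α) / (d * (β / α)) := by gcongr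
        _ = ‖gradient f x₀‖ ^ 2 / (2 * β * d) := by field_simp
        _ ≤ d * ‖gradient f x₀ j‖ ^ 2 / (2 * β * d) := by gcongr
        _ = ‖gradient f x₀ j‖ ^ 2 / (2 * β) := by field_simp
  rw [mul_one_sub, mul_one_div]
  linarith [(hy _).trans hstep]

/-- One step of the partial-minimization algorithm from `x₀`, minimizing
over the block `j` with the largest block gradient, decreases the gap to the minimum by
the factor `1 - 1/(dκ)` with `κ = β/α`. -/
theorem partial_min_first_step {d : ℕ} (hd : 2 ≤ d) {m : Fin d → ℕ} (hm : ∀ i, 1 ≤ m i)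
    (f : PiLp 2 (fun i : Fin d => EuclideanSpace ℝ (Fin (m i))) → ℝ)
    (hf : ContDiff ℝ 2 f)
    (hHess : ∀ x v : PiLp 2 (fun i : Fin d => EuclideanSpace ℝ (Fin (m i))), v ≠ 0 →
      0 < iteratedFDeriv ℝ 2 f x ![v, v])
    (xstar : PiLp 2 (fun i : Fin d => EuclideanSpace ℝ (Fin (m i))))
    (hmin : ∀ y, f xstar ≤ f y)
    (huniq : ∀ y, (∀ z, f y ≤ f z) → y = xstar)
    (x₀ : PiLp 2 (fun i : Fin d => EuclideanSpace ℝ (Fin (m i))))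
    (α β : ℝ) (hα : 0 < α) (hαβ : α ≤ β)
    (hEig : ∀ y, f y ≤ f x₀ → ∀ v : PiLp 2 (fun i : Fin d => EuclideanSpace ℝ (Fin (m i))),
      α * ‖v‖ ^ 2 ≤ iteratedFDeriv ℝ 2 f y ![v, v] ∧
      iteratedFDeriv ℝ 2 f y ![v, v] ≤ β * ‖v‖ ^ 2)
    (j : Fin d)
    (hj : ∀ l : Fin d, ‖gradient f x₀ l‖ ≤ ‖gradient f x₀ j‖)
    (y : EuclideanSpace ℝ (Fin (m j)))
    (hy : ∀ z : EuclideanSpace ℝ (Fin (m j)),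
      f (WithLp.toLp 2 (Function.update x₀ j y)) ≤ f (WithLp.toLp 2 (Function.update x₀ j z))) :
    f (WithLp.toLp 2 (Function.update x₀ j y)) - f xstar ≤
      (f x₀ - f xstar) * (1 - 1 / (d * (β / α))) :=
  partial_min_first_step_general f hf hHess xstar hmin x₀ α β hα hαβ hEig j hj y hy
end

section
/- Let B = [b_{i₁,…,i_d}] ∈ ℝ₊^{m₁×⋯×m_d} (d ≥ 2, each m_j ≥ 2) be a nonnegative tensor with no zero slice, and let s_k ∈ ℝ^{m_k}, k ∈ [d], be positive vectors satisfying the compatibility condition. Let f̃ be the restriction of f̂ to U(s₁,…,s_d) and let f be the restriction of f̃ to V₀(s₁,…,s_d)^⊥. Then the following are equivalent: (1) f̃ attains a global minimum on U(s₁,…,s_d); (2) f̃ has a critical point; (3) f(x_l) → ∞ for every sequence x_l ∈ V₀(s₁,…,s_d)^⊥ with ‖x_l‖ → ∞; (4) the only x = (x₁,…,x_d) ∈ V₀(s₁,…,s_d)^⊥ satisfying x_{1,i₁}+⋯+x_{d,i_d} ≤ 0 whenever b_{i₁,…,i_d} > 0 is x = 0. -/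
section

variable {d : ℕ} {m : Fin d → ℕ}

/-- The subspace `U(s₁,…,s_d) = {x : sₖᵀxₖ = 0 for all k}` of
`ℝ^{m₁} × ⋯ × ℝ^{m_d}`, realized inside `EuclideanSpace ℝ ((k : Fin d) × Fin (m k))`. -/
noncomputable def Usub (s : (k : Fin d) → Fin (m k) → ℝ) :
    Submodule ℝ (EuclideanSpace ℝ ((k : Fin d) × Fin (m k))) where
  carrier := {x | ∀ k : Fin d, ∑ i : Fin (m k), s k i * x ⟨k, i⟩ = 0}
  add_mem' := by
    intro a b ha hb k
    simp only [PiLp.add_apply, mul_add, Finset.sum_add_distrib, ha k, hb k, add_zero]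
  zero_mem' := by intro k; simp
  smul_mem' := by
    intro c a ha k
    have : ∀ i : Fin (m k), s k i * (c • a) ⟨k, i⟩ = c * (s k i * a ⟨k, i⟩) := by
      intro i; simp [PiLp.smul_apply, smul_eq_mul]; ring
    simp only [this, ← Finset.mul_sum, ha k, mul_zero]

/-- The subspace `V(s₁,…,s_d) = {x : x₁(i₁) + ⋯ + x_d(i_d) = 0 whenever B i > 0}`. -/
noncomputable def Vsub (B : ((j : Fin d) → Fin (m j)) → ℝ) :
    Submodule ℝ (EuclideanSpace ℝ ((k : Fin d) × Fin (m k))) where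
  carrier := {x | ∀ i : (j : Fin d) → Fin (m j), 0 < B i → ∑ k : Fin d, x ⟨k, i k⟩ = 0}
  add_mem' := by
    intro a b ha hb i hi
    simp only [PiLp.add_apply, Finset.sum_add_distrib, ha i hi, hb i hi, add_zero]
  zero_mem' := by intro i _; simp
  smul_mem' := by
    intro c a ha i hi
    have : ∀ k : Fin d, (c • a) ⟨k, i k⟩ = c * a ⟨k, i k⟩ := by
      intro k; simp [PiLp.smul_apply, smul_eq_mul]
    simp only [this, ← Finset.mul_sum, ha i hi, mul_zero]

/-- The orthogonal complement `V₀(s₁,…,s_d)^⊥` of `V₀ = V ∩ U` inside `U`. -/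
noncomputable def V0perp (B : ((j : Fin d) → Fin (m j)) → ℝ)
    (s : (k : Fin d) → Fin (m k) → ℝ) :
    Submodule ℝ (EuclideanSpace ℝ ((k : Fin d) × Fin (m k))) :=
  Usub s ⊓ (Vsub B ⊓ Usub s)ᗮ

/-- The function `f̂(x) = ∑_i B i · exp(x₁(i₁) + ⋯ + x_d(i_d))`. -/
noncomputable def fhat (B : ((j : Fin d) → Fin (m j)) → ℝ)
    (y : EuclideanSpace ℝ ((k : Fin d) × Fin (m k))) : ℝ :=
  ∑ i : (j : Fin d) → Fin (m j), B i * Real.exp (∑ k : Fin d, y ⟨k, i k⟩)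

/-!
`f̂` is invariant under translations by `V`, so on `U = V₀ ⊕ V₀^⊥` it only sees the
`V₀^⊥`-component. Since `e^t ≥ max t 0`, `f̂` dominates `N(x) = ∑ bᵢ max (ℓᵢ x) 0`, where
`ℓᵢ x = x_{1,i₁}+⋯+x_{d,i_d}`; `N` is continuous and positively homogeneous, and (4) says exactly
that it is positive on the unit sphere of `V₀^⊥`. Compactness of that sphere gives `N x ≥ ε‖x‖`,
whence coercivity (3). Coercivity yields a minimum on `V₀^⊥`, which by invariance is a minimum
on `U`, and a minimum is critical. At a critical point `x₀`, the derivative in the direction of a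
solution `x` of (4) is `∑ bᵢ e^{ℓᵢ x₀} ℓᵢ x`, a vanishing sum of nonpositive terms; so `ℓᵢ x = 0`
whenever `bᵢ > 0`, i.e. `x ∈ V ∩ V₀^⊥ = 0`.
-/

open Filter

section General

variable {E : Type*} [NormedAddCommGroup E]

theorem IsMinOn.fderiv_apply_eq_zero_of_mem [NormedSpace ℝ E] {f : E → ℝ} {K : Submodule ℝ E} {a v : E}
    (hmin : IsMinOn f K a) (ha : a ∈ K) (hf : DifferentiableAt ℝ f a) (hv : v ∈ K) :
    fderiv ℝ f a v = 0 :=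
  have tangent : ∀ w ∈ K, w ∈ posTangentConeAt (K : Set E) a := fun _ hw =>
    mem_posTangentConeAt_of_segment_subset (K.convex.segment_subset ha (K.add_mem ha hw))
  hmin.localize.hasFDerivWithinAt_eq_zero hf.hasFDerivAt.hasFDerivWithinAt
    (tangent v hv) (tangent (-v) (K.neg_mem hv))

theorem exists_isMinOn_of_forall_tendsto_norm [ProperSpace E] {f : E → ℝ} {S : Set E}
    (hf : ContinuousOn f S) (hS : IsClosed S) (hne : S.Nonempty)
    (hcoer : ∀ x : ℕ → E, (∀ l, x l ∈ S) → Tendsto (fun l => ‖x l‖) atTop atTop →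
      Tendsto (fun l => f (x l)) atTop atTop) :
    ∃ x ∈ S, IsMinOn f S x := by
  obtain ⟨x₀, hx₀⟩ := hne
  refine hf.exists_isMinOn' hS hx₀ ?_
  rw [← Metric.cobounded_eq_cocompact, (hasBasis_cobounded_norm.inf_principal S).eventually_iff]
  by_contra! hfar
  choose x hx using fun n : ℕ => hfar n trivial
  have hnorm : Tendsto (fun l => ‖x l‖) atTop atTop :=
    tendsto_atTop_mono (fun n => (hx n).1.1) tendsto_natCast_atTop_atTop
  obtain ⟨n, hn⟩ := ((hcoer x (fun n => (hx n).1.2) hnorm).eventually_ge_atTop (f x₀)).exists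
  exact (hx n).2.not_ge hn

theorem exists_pos_mul_norm_le_of_pos [NormedSpace ℝ E] [FiniteDimensional ℝ E] {g : E → ℝ} (hg : Continuous g)
    (hsmul : ∀ a : ℝ, 0 ≤ a → ∀ y, g (a • y) = a * g y) (K : Submodule ℝ E)
    (hpos : ∀ y ∈ K, y ≠ 0 → 0 < g y) :
    ∃ ε > 0, ∀ y ∈ K, ε * ‖y‖ ≤ g y := by
  have hsphere : IsCompact ((K : Set E) ∩ Metric.sphere 0 1) :=
    (isCompact_sphere 0 1).inter_left K.closed_of_finiteDimensional
  obtain ⟨ε, hε, hbound⟩ := hsphere.exists_forall_le' hg.continuousOn fun y hy =>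
    hpos y hy.1 (ne_zero_of_mem_unit_sphere ⟨y, hy.2⟩)
  refine ⟨ε, hε, fun y hy => ?_⟩
  rcases eq_or_ne y 0 with rfl | hy0
  · simpa using (hsmul 0 le_rfl 0).symm.le
  have hny : 0 < ‖y‖ := norm_pos_iff.mpr hy0
  have hunit := hbound (‖y‖⁻¹ • y)
    ⟨K.smul_mem _ hy, by simp [norm_smul, inv_mul_cancel₀ hny.ne']⟩
  rw [hsmul _ (inv_nonneg.mpr hny.le)] at hunit
  rwa [← le_inv_mul_iff₀' hny]

end General

local notation "𝔼" => EuclideanSpace ℝ ((k : Fin d) × Fin (m k))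

noncomputable def coordSum (i : (j : Fin d) → Fin (m j)) : 𝔼 →L[ℝ] ℝ :=
  ∑ k : Fin d, EuclideanSpace.proj ⟨k, i k⟩

@[simp]
theorem coordSum_apply (i : (j : Fin d) → Fin (m j)) (x : 𝔼) :
    coordSum i x = ∑ k : Fin d, x ⟨k, i k⟩ := by
  simp [coordSum]

variable (B : ((j : Fin d) → Fin (m j)) → ℝ)

theorem fhat_eq_sum_coordSum :
    fhat B = fun y : 𝔼 => ∑ i, B i * Real.exp (coordSum i y) := by
  ext y
  simp [fhat]

theorem hasFDerivAt_fhat (x : 𝔼) :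
    HasFDerivAt (fhat B) (∑ i, (B i * Real.exp (coordSum i x)) • coordSum i) x := by
  rw [fhat_eq_sum_coordSum]
  refine HasFDerivAt.fun_sum fun i _ => ?_
  simpa [smul_smul] using ((coordSum i).hasFDerivAt.exp).const_mul (B i)

theorem fderiv_fhat_apply (x v : 𝔼) :
    fderiv ℝ (fhat B) x v = ∑ i, B i * Real.exp (coordSum i x) * ∑ k, v ⟨k, i k⟩ := by
  simp [(hasFDerivAt_fhat B x).fderiv]

theorem continuous_fhat : Continuous (fhat B : 𝔼 → ℝ) :=
  continuous_iff_continuousAt.mpr fun x => (hasFDerivAt_fhat B x).continuousAt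

noncomputable def posPartSum (y : 𝔼) : ℝ :=
  ∑ i, B i * max (coordSum i y) 0

theorem continuous_posPartSum : Continuous (posPartSum B : 𝔼 → ℝ) := by
  unfold posPartSum
  fun_prop

theorem posPartSum_smul (a : ℝ) (ha : 0 ≤ a) (y : 𝔼) :
    posPartSum B (a • y) = a * posPartSum B y := by
  simp only [posPartSum, map_smul, smul_eq_mul, Finset.mul_sum]
  refine Finset.sum_congr rfl fun i _ => ?_
  rw [mul_left_comm, mul_max_of_nonneg _ _ ha, mul_zero]

variable {B}

theorem posPartSum_le_fhat (hB : ∀ i, 0 ≤ B i) (y : 𝔼) : posPartSum B y ≤ fhat B y := by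
  rw [fhat_eq_sum_coordSum]
  refine Finset.sum_le_sum fun i _ => mul_le_mul_of_nonneg_left ?_ (hB i)
  exact max_le (by linarith [Real.add_one_le_exp (coordSum i y)]) (Real.exp_pos _).le

theorem posPartSum_pos (hB : ∀ i, 0 ≤ B i) {y : 𝔼}
    (hy : ∃ i, 0 < B i ∧ 0 < ∑ k, y ⟨k, i k⟩) : 0 < posPartSum B y := by
  obtain ⟨i, hBi, hyi⟩ := hy
  refine Finset.sum_pos' (fun j _ => mul_nonneg (hB j) (le_max_right _ _)) ⟨i, by simp, ?_⟩
  exact mul_pos hBi (by simpa using hyi)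

theorem fhat_add_of_mem_Vsub (hB : ∀ i, 0 ≤ B i) {v : 𝔼} (hv : v ∈ Vsub B) (w : 𝔼) :
    fhat B (v + w) = fhat B w := by
  refine Finset.sum_congr rfl fun i _ => ?_
  rcases (hB i).eq_or_lt with hBi | hBi
  · simp [← hBi]
  · simp [Finset.sum_add_distrib, hv i hBi]

theorem mem_Vsub_of_fderiv_fhat_apply_eq_zero (hB : ∀ i, 0 ≤ B i) {x v : 𝔼}
    (hv : ∀ i, 0 < B i → ∑ k, v ⟨k, i k⟩ ≤ 0) (hcrit : fderiv ℝ (fhat B) x v = 0) :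
    v ∈ Vsub B := by
  intro i hBi
  have hterm : ∀ j ∈ Finset.univ,
      B j * Real.exp (coordSum j x) * ∑ k, v ⟨k, j k⟩ ≤ 0 := by
    intro j _
    rcases (hB j).eq_or_lt with hBj | hBj
    · simp [← hBj]
    · exact mul_nonpos_of_nonneg_of_nonpos (by positivity) (hv j hBj)
  rw [fderiv_fhat_apply, Finset.sum_eq_zero_iff_of_nonpos hterm] at hcrit
  exact (mul_eq_zero.mp (hcrit i (Finset.mem_univ i))).resolve_left (by positivity)

variable {s : (k : Fin d) → Fin (m k) → ℝ}

theorem eq_zero_of_mem_Vsub_of_mem_V0perp {x : 𝔼} (hV : x ∈ Vsub B) (hx : x ∈ V0perp B s) :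
    x = 0 :=
  (Submodule.mem_bot ℝ).mp <|
    (Submodule.orthogonal_disjoint (Vsub B ⊓ Usub s)).le_bot ⟨⟨hV, hx.1⟩, hx.2⟩

theorem exists_mem_V0perp_fhat_eq (hB : ∀ i, 0 ≤ B i) {y : 𝔼} (hy : y ∈ Usub s) :
    ∃ w ∈ V0perp B s, fhat B w = fhat B y := by
  obtain ⟨v, hv, w, hw, rfl⟩ := (Vsub B ⊓ Usub s).exists_add_mem_mem_orthogonal y
  have hwU : w ∈ Usub s := by simpa using (Usub s).sub_mem hy hv.2
  exact ⟨w, ⟨hwU, hw⟩, (fhat_add_of_mem_Vsub hB hv.1 w).symm⟩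

theorem scaling_equivalent_conditions_general {d : ℕ} {m : Fin d → ℕ}
    (B : ((j : Fin d) → Fin (m j)) → ℝ)
    (hB : ∀ i, 0 ≤ B i)
    (s : (k : Fin d) → Fin (m k) → ℝ) :
    List.TFAE
      [ -- (1) `f̃` has a global minimum on `U`
        ∃ x ∈ Usub s, ∀ y ∈ Usub s, fhat B x ≤ fhat B y,
        -- (2) `f̃` has a critical point
        ∃ x ∈ Usub s, ∀ v ∈ Usub s, fderiv ℝ (fhat B) x v = 0,
        -- (3) `f` is coercive on `V₀(s₁,…,s_d)^⊥`
        ∀ x : ℕ → EuclideanSpace ℝ ((k : Fin d) × Fin (m k)),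
          (∀ l, x l ∈ V0perp B s) →
          Filter.Tendsto (fun l => ‖x l‖) Filter.atTop Filter.atTop →
          Filter.Tendsto (fun l => fhat B (x l)) Filter.atTop Filter.atTop,
        -- (4) the only solution of the inequalities in `V₀(s₁,…,s_d)^⊥` is `0`
        ∀ x ∈ V0perp B s,
          (∀ i : (j : Fin d) → Fin (m j), 0 < B i → ∑ k : Fin d, x ⟨k, i k⟩ ≤ 0) →
          x = 0 ] := by
  tfae_have 1 → 2 := fun ⟨x, hxU, hmin⟩ => ⟨x, hxU, fun v hv =>
    IsMinOn.fderiv_apply_eq_zero_of_mem hmin hxU (hasFDerivAt_fhat B x).differentiableAt hv⟩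
  tfae_have 2 → 4 := fun ⟨_, _, hcrit⟩ x hx hneg =>
    eq_zero_of_mem_Vsub_of_mem_V0perp
      (mem_Vsub_of_fderiv_fhat_apply_eq_zero hB hneg (hcrit x hx.1)) hx
  tfae_have 4 → 3 := by
    intro h4 x hx hnorm
    have hpos : ∀ y ∈ V0perp B s, y ≠ 0 → 0 < posPartSum B y := by
      intro y hy hy0
      refine posPartSum_pos hB ?_
      by_contra! hneg
      exact hy0 (h4 y hy hneg)
    obtain ⟨ε, hε, hbound⟩ := exists_pos_mul_norm_le_of_pos (continuous_posPartSum B)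
      (posPartSum_smul B) (V0perp B s) hpos
    exact tendsto_atTop_mono (fun l => (hbound _ (hx l)).trans (posPartSum_le_fhat hB _))
      (hnorm.const_mul_atTop hε)
  tfae_have 3 → 1 := by
    intro h3
    obtain ⟨w, hw, hmin⟩ := exists_isMinOn_of_forall_tendsto_norm
      (continuous_fhat B).continuousOn (V0perp B s).closed_of_finiteDimensional
      ⟨0, (V0perp B s).zero_mem⟩ h3
    refine ⟨w, hw.1, fun y hy => ?_⟩
    obtain ⟨w', hw', hfw'⟩ := exists_mem_V0perp_fhat_eq hB hy
    exact hfw' ▸ hmin hw'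
  tfae_finish

/-- Theorem 3.5 of the paper. For a nonnegative tensor `B` with no zero
slice and compatible positive vectors `s`, the following are equivalent: (1) the
restriction `f̃` of `f̂` to `U` attains a global minimum; (2) `f̃` has a critical point;
(3) `f → ∞` along every sequence in `V₀^⊥` whose norms tend to `∞`; (4) the only
`x ∈ V₀^⊥` with `x₁(i₁)+⋯+x_d(i_d) ≤ 0` whenever `B i > 0` is `x = 0`. -/
theorem scaling_equivalent_conditions {d : ℕ} {m : Fin d → ℕ} (hd : 2 ≤ d)
    (hm : ∀ j, 2 ≤ m j)
    (B : ((j : Fin d) → Fin (m j)) → ℝ)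
    (hB : ∀ i, 0 ≤ B i)
    (hslice : ∀ (k : Fin d) (ik : Fin (m k)),
      ∃ i : (j : Fin d) → Fin (m j), i k = ik ∧ B i ≠ 0)
    (s : (k : Fin d) → Fin (m k) → ℝ) (hs : ∀ k i, 0 < s k i)
    (hcompat : ∀ k l : Fin d, ∑ i, s k i = ∑ i, s l i) :
    List.TFAE
      [ -- (1) `f̃` has a global minimum on `U`
        ∃ x ∈ Usub s, ∀ y ∈ Usub s, fhat B x ≤ fhat B y,
        -- (2) `f̃` has a critical point
        ∃ x ∈ Usub s, ∀ v ∈ Usub s, fderiv ℝ (fhat B) x v = 0,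
        -- (3) `f` is coercive on `V₀(s₁,…,s_d)^⊥`
        ∀ x : ℕ → EuclideanSpace ℝ ((k : Fin d) × Fin (m k)),
          (∀ l, x l ∈ V0perp B s) →
          Filter.Tendsto (fun l => ‖x l‖) Filter.atTop Filter.atTop →
          Filter.Tendsto (fun l => fhat B (x l)) Filter.atTop Filter.atTop,
        -- (4) the only solution of the inequalities in `V₀(s₁,…,s_d)^⊥` is `0`
        ∀ x ∈ V0perp B s,
          (∀ i : (j : Fin d) → Fin (m j), 0 < B i → ∑ k : Fin d, x ⟨k, i k⟩ ≤ 0) →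
          x = 0 ] :=
  scaling_equivalent_conditions_general B hB s

end
end

section
/- Let A ∈ ℝ₊^{m×n} be a nonnegative matrix with no zero row and no zero column, and let b ∈ ℝ^m and a, c ∈ ℝⁿ be positive vectors satisfying cᵀa = 1_mᵀb. Then there exists a scaling B of A (i.e., B = D₁AD₂ for some diagonal matrices D₁ ∈ ℝ^{m×m}, D₂ ∈ ℝ^{n×n} with positive diagonal entries) satisfying Ba = b and Bᵀ1_m = c, if and only if there exists a nonnegative matrix C ∈ ℝ₊^{m×n} with the same zero pattern as A (c_{ij} = 0 ⟺ a_{ij} = 0) satisfying Ca = b and Cᵀ1_m = c. Moreover, if such a scaling B exists, it is unique. -/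
/-!
Put `Wᵢⱼ = Aᵢⱼ aⱼ` and `Kᵢⱼ = Cᵢⱼ aⱼ`. The partial derivatives of the potential
`F(u, v) = ∑ᵢⱼ (e^{uᵢ+vⱼ} Wᵢⱼ - Kᵢⱼ (uᵢ + vⱼ))` are the differences between the row and column
sums of the scaling `e^{uᵢ+vⱼ} Wᵢⱼ` and those of `K`, so a minimiser of `F` gives the scaling.
`F` depends on `(u, v)` only through the vector of the `uᵢ + vⱼ` with `Wᵢⱼ ≠ 0`, and as a function
of that vector it is a sum of coercive functions `w eᵗ - k t` with `w, k > 0` (this is where the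
common zero pattern of `W` and `K` enters); so it attains its minimum on the closed subspace of
such vectors.

For uniqueness, if `B` and `B' = e^{sᵢⱼ} B` with `sᵢⱼ = (u'ᵢ - uᵢ) + (v'ⱼ - vⱼ)` have the same
row and column sums, then `∑ᵢⱼ (B' - B)ᵢⱼ sᵢⱼ = 0`, while every term `Bᵢⱼ (e^{sᵢⱼ} - 1) sᵢⱼ` is
nonnegative; hence `B' = B`.
-/

open Filter Real Topology
open scoped Matrix

theorem tendsto_mul_exp_sub_mul_cocompact {w k : ℝ} (hw : 0 < w) (hk : 0 < k) :
    Tendsto (fun t => w * exp t - k * t) (cocompact ℝ) atTop := by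
  rw [cocompact_eq_atBot_atTop, tendsto_sup]
  constructor
  · refine tendsto_atTop_mono (fun t => ?_) (tendsto_neg_atBot_atTop.const_mul_atTop hk)
    nlinarith [exp_pos t]
  · have hsmall : Tendsto (fun t => w - k * (t * exp (-t))) atTop (𝓝 w) := by
      simpa using (tendsto_pow_mul_exp_neg_atTop_nhds_zero 1).const_mul k |>.const_sub w
    refine (tendsto_exp_atTop.atTop_mul_pos hw hsmall).congr fun t => ?_
    rw [exp_neg]
    field_simp

theorem tendsto_sum_apply_cocompact {σ X : Type*} [Fintype σ] [TopologicalSpace X] [Nonempty X]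
    {φ : σ → X → ℝ} (hcont : ∀ p, Continuous (φ p)) (hφ : ∀ p, Tendsto (φ p) (cocompact X) atTop) :
    Tendsto (fun s : σ → X => ∑ p, φ p (s p)) (cocompact (σ → X)) atTop := by
  classical
  choose t ht using fun p => (hcont p).exists_forall_le (hφ p)
  rw [← coprodᵢ_cocompact]
  refine tendsto_iSup.2 fun p => ?_
  refine tendsto_atTop_mono (fun s => ?_) <|
    tendsto_atTop_add_const_right _ (∑ q ∈ Finset.univ.erase p, φ q (t q))
      ((hφ p).comp tendsto_comap)
  rw [← Finset.add_sum_erase _ _ (Finset.mem_univ p)]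
  exact add_le_add_right (Finset.sum_le_sum fun q _ => ht q (s q)) _

theorem LinearMap.exists_forall_le_comp {E F : Type*} [AddCommGroup E] [Module ℝ E]
    [NormedAddCommGroup F] [NormedSpace ℝ F] [FiniteDimensional ℝ F] (T : E →ₗ[ℝ] F) {G : F → ℝ}
    (hG : Continuous G) (hGc : Tendsto G (cocompact F) atTop) :
    ∃ x, ∀ y, G (T x) ≤ G (T y) := by
  have hclosed : IsClosed (LinearMap.range T : Set F) := Submodule.closed_of_finiteDimensional _
  obtain ⟨⟨_, x, rfl⟩, hx⟩ := (hG.comp continuous_subtype_val).exists_forall_le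
    (hGc.comp hclosed.isClosedEmbedding_subtypeVal.tendsto_cocompact)
  exact ⟨x, fun y => hx ⟨T y, LinearMap.mem_range_self T y⟩⟩

section

variable {ι κ : Type*} [Fintype ι] [Fintype κ]

theorem Matrix.sum_mul_add (M : Matrix ι κ ℝ) (x : ι → ℝ) (y : κ → ℝ) :
    ∑ i, ∑ j, M i j * (x i + y j) = ∑ i, (∑ j, M i j) * x i + ∑ j, (∑ i, M i j) * y j := by
  simp only [mul_add, Finset.sum_add_distrib, Finset.sum_mul]
  rw [Finset.sum_comm (f := fun i j => M i j * y j)]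

theorem exp_sub_one_mul_self_nonneg (t : ℝ) : 0 ≤ (exp t - 1) * t := by
  rcases le_total 0 t with ht | ht
  · exact mul_nonneg (sub_nonneg.2 (one_le_exp ht)) ht
  · exact mul_nonneg_of_nonpos_of_nonpos (sub_nonpos.2 (exp_le_one_iff.2 ht)) ht

theorem exp_scaling_eq_of_sums_eq {W : Matrix ι κ ℝ} (hW : ∀ i j, 0 ≤ W i j)
    {u u' : ι → ℝ} {v v' : κ → ℝ}
    (hrow : ∀ i, ∑ j, exp (u i + v j) * W i j = ∑ j, exp (u' i + v' j) * W i j)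
    (hcol : ∀ j, ∑ i, exp (u i + v j) * W i j = ∑ i, exp (u' i + v' j) * W i j) (i : ι) (j : κ) :
    exp (u i + v j) * W i j = exp (u' i + v' j) * W i j := by
  set s : ι → κ → ℝ := fun i j => (u' i - u i) + (v' j - v j)
  set D : Matrix ι κ ℝ := fun i j => exp (u' i + v' j) * W i j - exp (u i + v j) * W i j
  have hD : ∀ i j, D i j = exp (u i + v j) * W i j * (exp (s i j) - 1) := fun i j => by
    simp only [D, s, mul_sub, mul_one, mul_right_comm _ (W i j), ← exp_add]
    ring_nf
  have hterm : ∀ i j, 0 ≤ D i j * s i j := fun i j => by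
    rw [hD, mul_assoc]
    exact mul_nonneg (mul_nonneg (exp_pos _).le (hW i j)) (exp_sub_one_mul_self_nonneg _)
  have hDrow : ∀ i, ∑ j, D i j = 0 := fun i => by simp [D, Finset.sum_sub_distrib, hrow]
  have hDcol : ∀ j, ∑ i, D i j = 0 := fun j => by simp [D, Finset.sum_sub_distrib, hcol]
  have hsum : ∑ i, ∑ j, D i j * s i j = 0 :=
    (Matrix.sum_mul_add D (fun i => u' i - u i) (fun j => v' j - v j)).trans
      (by simp [hDrow, hDcol])
  have hzero : D i j * s i j = 0 :=
    (Finset.sum_eq_zero_iff_of_nonneg fun j _ => hterm i j).1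
      ((Finset.sum_eq_zero_iff_of_nonneg fun i _ =>
        Finset.sum_nonneg fun j _ => hterm i j).1 hsum i (Finset.mem_univ i)) j (Finset.mem_univ j)
  have hDij : D i j = 0 := by
    rcases mul_eq_zero.1 hzero with h | h
    · exact h
    · rw [hD, h, exp_zero, sub_self, mul_zero]
  exact (sub_eq_zero.1 hDij).symm

noncomputable def scalingPotential (W K : Matrix ι κ ℝ) (u : ι → ℝ) (v : κ → ℝ) : ℝ :=
  ∑ i, ∑ j, (exp (u i + v j) * W i j - K i j * (u i + v j))

theorem scalingPotential_transpose (W K : Matrix ι κ ℝ) (u : ι → ℝ) (v : κ → ℝ) :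
    scalingPotential Wᵀ Kᵀ v u = scalingPotential W K u v := by
  unfold scalingPotential
  rw [Finset.sum_comm]
  simp only [Matrix.transpose_apply, add_comm (v _)]

theorem sum_exp_mul_eq_sum_of_isMin {W K : Matrix ι κ ℝ} {u : ι → ℝ} {v : κ → ℝ}
    (hmin : ∀ u' v', scalingPotential W K u v ≤ scalingPotential W K u' v') (i : ι) :
    ∑ j, exp (u i + v j) * W i j = ∑ j, K i j := by
  classical
  let f : ℝ → ℝ := fun t => ∑ j, (exp (t + v j) * W i j - K i j * (t + v j))
  let R : (ι → ℝ) → ℝ := fun u' => ∑ i' ∈ Finset.univ.erase i,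
      ∑ j, (exp (u' i' + v j) * W i' j - K i' j * (u' i' + v j))
  have hsplit : ∀ u', scalingPotential W K u' v = f (u' i) + R u' := fun u' =>
    (Finset.add_sum_erase _ _ (Finset.mem_univ i)).symm
  have hR : ∀ t, R (Function.update u i t) = R u := fun t =>
    Finset.sum_congr rfl fun i' hi' => by rw [Function.update_of_ne (Finset.ne_of_mem_erase hi')]
  have hlocal : IsLocalMin f (u i) := Eventually.of_forall fun t => by
    have h := hmin (Function.update u i t) v
    rwa [hsplit, hsplit, hR, Function.update_self, add_le_add_iff_right] at h
  have hderiv : HasDerivAt f (∑ j, (exp (u i + v j) * W i j - K i j)) (u i) :=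
    HasDerivAt.fun_sum fun j _ => by
      simpa using (((hasDerivAt_id _).add_const (v j)).exp.mul_const (W i j)).fun_sub
        (((hasDerivAt_id _).add_const (v j)).const_mul (K i j))
  rw [← sub_eq_zero, ← Finset.sum_sub_distrib]
  exact hlocal.hasDerivAt_eq_zero hderiv

theorem exists_isMin_scalingPotential {W K : Matrix ι κ ℝ} (hW : ∀ i j, 0 ≤ W i j)
    (hK : ∀ i j, 0 ≤ K i j) (hWK : ∀ i j, K i j = 0 ↔ W i j = 0) :
    ∃ u v, ∀ u' v', scalingPotential W K u v ≤ scalingPotential W K u' v' := by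
  let P : ι × κ → Prop := fun p => W p.1 p.2 ≠ 0
  let T : (ι → ℝ) × (κ → ℝ) →ₗ[ℝ] Subtype P → ℝ := LinearMap.pi fun p =>
    LinearMap.proj (R := ℝ) (φ := fun _ : ι => ℝ) p.1.1 ∘ₗ LinearMap.fst ℝ _ _ +
      LinearMap.proj (R := ℝ) (φ := fun _ : κ => ℝ) p.1.2 ∘ₗ LinearMap.snd ℝ _ _
  have hpot : ∀ x : (ι → ℝ) × (κ → ℝ), scalingPotential W K x.1 x.2 =
      ∑ p : Subtype P, (W p.1.1 p.1.2 * exp (T x p) - K p.1.1 p.1.2 * T x p) := by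
    intro x
    rw [scalingPotential, ← Fintype.sum_prod_type', ← Finset.sum_filter_of_ne (p := P)
      fun q _ hq => ?_, Finset.sum_subtype (p := P) _ fun q => by simp]
    · exact Finset.sum_congr rfl fun p _ => by simp [T, mul_comm]
    · contrapose! hq
      simp [hq, (hWK _ _).2 hq]
  have hWpos : ∀ p : Subtype P, 0 < W p.1.1 p.1.2 := fun p => (hW _ _).lt_of_ne' p.2
  have hKpos : ∀ p : Subtype P, 0 < K p.1.1 p.1.2 :=
    fun p => (hK _ _).lt_of_ne' ((hWK _ _).not.2 p.2)
  obtain ⟨x, hx⟩ := T.exists_forall_le_comp (by fun_prop)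
    (tendsto_sum_apply_cocompact (fun p => by fun_prop)
      fun p => tendsto_mul_exp_sub_mul_cocompact (hWpos p) (hKpos p))
  exact ⟨x.1, x.2, fun u' v' => (hpot x).trans_le ((hx (u', v')).trans_eq (hpot (u', v')).symm)⟩

theorem exists_exp_scaling_of_zero_iff {W K : Matrix ι κ ℝ} (hW : ∀ i j, 0 ≤ W i j)
    (hK : ∀ i j, 0 ≤ K i j) (hWK : ∀ i j, K i j = 0 ↔ W i j = 0) :
    ∃ (u : ι → ℝ) (v : κ → ℝ), (∀ i, ∑ j, exp (u i + v j) * W i j = ∑ j, K i j) ∧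
      ∀ j, ∑ i, exp (u i + v j) * W i j = ∑ i, K i j := by
  obtain ⟨u, v, hmin⟩ := exists_isMin_scalingPotential hW hK hWK
  have hcol := sum_exp_mul_eq_sum_of_isMin (W := Wᵀ) (K := Kᵀ) fun v' u' => by
    simpa only [scalingPotential_transpose] using hmin u' v'
  exact ⟨u, v, sum_exp_mul_eq_sum_of_isMin hmin, fun j => by simpa [add_comm] using hcol j⟩

end

theorem generalized_schrodinger_bridge_general {m n : ℕ}
    (A : Matrix (Fin m) (Fin n) ℝ)
    (hA : ∀ i j, 0 ≤ A i j)
    (b : Fin m → ℝ) (a c : Fin n → ℝ)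
    (ha : ∀ j, 0 < a j) :
    ((∃ B : Matrix (Fin m) (Fin n) ℝ,
        (∃ u : Fin m → ℝ, ∃ v : Fin n → ℝ, ∀ i j, B i j = Real.exp (u i + v j) * A i j) ∧
        (∀ i, ∑ j, B i j * a j = b i) ∧ (∀ j, ∑ i, B i j = c j)) ↔
      (∃ C : Matrix (Fin m) (Fin n) ℝ, (∀ i j, 0 ≤ C i j) ∧
        (∀ i j, C i j = 0 ↔ A i j = 0) ∧
        (∀ i, ∑ j, C i j * a j = b i) ∧ (∀ j, ∑ i, C i j = c j))) ∧
    (∀ B B' : Matrix (Fin m) (Fin n) ℝ,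
      (∃ u : Fin m → ℝ, ∃ v : Fin n → ℝ, ∀ i j, B i j = Real.exp (u i + v j) * A i j) →
      (∀ i, ∑ j, B i j * a j = b i) → (∀ j, ∑ i, B i j = c j) →
      (∃ u : Fin m → ℝ, ∃ v : Fin n → ℝ, ∀ i j, B' i j = Real.exp (u i + v j) * A i j) →
      (∀ i, ∑ j, B' i j * a j = b i) → (∀ j, ∑ i, B' i j = c j) →
      B = B') := by
  have hAa : ∀ i j, 0 ≤ A i j * a j := fun i j => mul_nonneg (hA i j) (ha j).le
  have hcol_iff : ∀ (M : Matrix (Fin m) (Fin n) ℝ) j,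
      ∑ i, M i j * a j = c j * a j ↔ ∑ i, M i j = c j := fun M j => by
    rw [← Finset.sum_mul, mul_left_inj' (ha j).ne']
  refine ⟨⟨?_, ?_⟩, ?_⟩
  · rintro ⟨B, ⟨u, v, hB⟩, hBrow, hBcol⟩
    exact ⟨B, fun i j => hB i j ▸ mul_nonneg (exp_pos _).le (hA i j),
      fun i j => by simp [hB, exp_ne_zero], hBrow, hBcol⟩
  · rintro ⟨C, hC, hCA, hCrow, hCcol⟩
    obtain ⟨u, v, hrow, hcol⟩ := exists_exp_scaling_of_zero_iff hAa
      (fun i j => mul_nonneg (hC i j) (ha j).le) fun i j => by simp [(ha j).ne', hCA]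
    refine ⟨Matrix.of fun i j => exp (u i + v j) * A i j, ⟨u, v, fun _ _ => rfl⟩,
      fun i => ?_, fun j => (hcol_iff _ j).1 ?_⟩
    · simpa [mul_assoc, hCrow] using hrow i
    · simpa [mul_assoc, Finset.sum_mul, ← hCcol] using hcol j
  · rintro B B' ⟨u, v, hB⟩ hBrow hBcol ⟨u', v', hB'⟩ hB'row hB'col
    simp only [← hcol_iff] at hBcol hB'col
    simp only [hB, hB', mul_assoc] at hBrow hBcol hB'row hB'col
    have heq := exp_scaling_eq_of_sums_eq hAa (fun i => (hBrow i).trans (hB'row i).symm)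
      fun j => (hBcol j).trans (hB'col j).symm
    ext i j
    rw [hB, hB']
    simpa [← mul_assoc, (ha j).ne'] using heq i j

/-- Theorem 5.2 of the paper, generalized discrete Schrödinger bridge.
Let `A ∈ ℝ₊^{m×n}` have no zero row and no zero column, and let `b > 0`, `a, c > 0` with
`cᵀa = 1ᵀb`. Then a positive diagonal scaling `B = D₁AD₂` (i.e. `B i j = e^{uᵢ+vⱼ} A i j`)
with `B a = b` and `Bᵀ1 = c` exists iff there is a nonnegative `C` with the same zero
pattern as `A` satisfying `C a = b` and `Cᵀ1 = c`; moreover such a scaling `B` is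
unique. -/
theorem generalized_schrodinger_bridge {m n : ℕ}
    (A : Matrix (Fin m) (Fin n) ℝ)
    (hA : ∀ i j, 0 ≤ A i j)
    (hrow : ∀ i, ∃ j, A i j ≠ 0)
    (hcol : ∀ j, ∃ i, A i j ≠ 0)
    (b : Fin m → ℝ) (a c : Fin n → ℝ)
    (hb : ∀ i, 0 < b i) (ha : ∀ j, 0 < a j) (hc : ∀ j, 0 < c j)
    (hsum : ∑ j, c j * a j = ∑ i, b i) :
    ((∃ B : Matrix (Fin m) (Fin n) ℝ,
        (∃ u : Fin m → ℝ, ∃ v : Fin n → ℝ, ∀ i j, B i j = Real.exp (u i + v j) * A i j) ∧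
        (∀ i, ∑ j, B i j * a j = b i) ∧ (∀ j, ∑ i, B i j = c j)) ↔
      (∃ C : Matrix (Fin m) (Fin n) ℝ, (∀ i j, 0 ≤ C i j) ∧
        (∀ i j, C i j = 0 ↔ A i j = 0) ∧
        (∀ i, ∑ j, C i j * a j = b i) ∧ (∀ j, ∑ i, C i j = c j))) ∧
    (∀ B B' : Matrix (Fin m) (Fin n) ℝ,
      (∃ u : Fin m → ℝ, ∃ v : Fin n → ℝ, ∀ i j, B i j = Real.exp (u i + v j) * A i j) →
      (∀ i, ∑ j, B i j * a j = b i) → (∀ j, ∑ i, B i j = c j) →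
      (∃ u : Fin m → ℝ, ∃ v : Fin n → ℝ, ∀ i j, B' i j = Real.exp (u i + v j) * A i j) →
      (∀ i, ∑ j, B' i j * a j = b i) → (∀ j, ∑ i, B' i j = c j) →
      B = B') :=
  generalized_schrodinger_bridge_general A hA b a c ha
end
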